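/- Let G = H ⋉ K be a semidirect product that is finitely generated, with K locally finite (every finitely generated subgroup of K is finite). Then asdim G = asdim H. -/

import Mathlib

def cayley (G : Type*) [Group G] (X : Set G) : SimpleGraph G :=
  SimpleGraph.fromRel (fun g h => ∃ x ∈ X, h = g * x)

def AsdimLE {V : Type*} (G : SimpleGraph V) (n : ℕ) : Prop :=
  ∀ m : ℕ, 0 < m → ∃ (ι : Type) (f : V → ι) (col : ι → Fin (n + 1)) (D : ℕ),
    (∀ u v : V, f u = f v → G.dist u v ≤ D) ∧
    (∀ u v : V, f u ≠ f v → col (f u) = col (f v) → m < G.dist u v)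

/-- A finitely generated group has asymptotic dimension at most `n` if each of its Cayley
graphs with respect to a finite generating set does. -/
def GroupAsdimLE (G : Type*) [Group G] (n : ℕ) : Prop :=
  ∀ X : Finset G, Subgroup.closure (X : Set G) = ⊤ → AsdimLE (cayley G (X : Set G)) n

/-!
The projection `p : G →* H` along `K` is a retraction, so `H` sits quasi-isometrically in `G` and
`asdim H ≤ asdim G`. Conversely, pull an `m`-separated uniformly bounded cover of `H` back along
the Lipschitz map `p` and split each preimage into its `m`-chain components. Translated to start
at `1`, a chain over a `D`-bounded set runs in `K * T` with `T` the `D`-ball of `H`, and its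
`K`-coordinates move by elements of the finite set `K ∩ T * B_m * T⁻¹` (`B_m` the `m`-ball of
`G`), which generates a finite subgroup `F` since `K` is locally finite. So every chain stays in
the finite set `T⁻¹ * F * T`, and the pieces are uniformly bounded.
-/

open Pointwise Relation

section Cayley

variable {G : Type*} [Group G] {X : Set G} {u v : G} {r : ℕ}

lemma cayley_eq_mulCayley (X : Set G) : cayley G X = SimpleGraph.mulCayley X := by
  simp only [cayley, SimpleGraph.mulCayley, eq_comm]

def wordBall (X : Set G) (r : ℕ) : Set G := insert 1 (X ∪ X⁻¹) ^ r

lemma wordBall_add (X : Set G) (r s : ℕ) : wordBall X (r + s) = wordBall X r * wordBall X s :=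
  pow_add _ r s

lemma wordBall_mul (X : Set G) (r s : ℕ) : wordBall X (r * s) = wordBall X r ^ s :=
  pow_mul _ r s

lemma inv_mem_wordBall {g : G} (h : g ∈ wordBall X r) : g⁻¹ ∈ wordBall X r := by
  rw [wordBall, ← Set.inv_mem_inv, ← inv_pow, Set.inv_insert, inv_one, Set.union_inv, inv_inv,
    Set.union_comm, inv_inv]
  exact h

lemma wordBall_mono {r s : ℕ} (h : r ≤ s) : wordBall X r ⊆ wordBall X s :=
  Set.pow_subset_pow_right (Set.mem_insert 1 _) h

lemma wordBall_finite (hX : X.Finite) (r : ℕ) : (wordBall X r).Finite := by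
  induction r with
  | zero => simp [wordBall]
  | succ r ih =>
    rw [wordBall_add]
    exact ih.mul (by simpa [wordBall] using (hX.union hX.inv).insert 1)

lemma image_wordBall {G' : Type*} [Group G'] (φ : G →* G') (X : Set G) (r : ℕ) :
    φ '' wordBall X r = wordBall (φ '' X) r := by
  rw [wordBall, wordBall, Set.image_pow, Set.image_insert_eq, Set.image_union, Set.image_inv,
    map_one]

lemma wordBall_subset_wordBall {Y : Set G} (h : X ⊆ Y) (r : ℕ) : wordBall X r ⊆ wordBall Y r :=
  Set.pow_subset_pow_left <|
    Set.insert_subset_insert (Set.union_subset_union h (Set.inv_subset_inv.2 h))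

lemma inv_mul_mem_wordBall_one_iff :
    u⁻¹ * v ∈ wordBall X 1 ↔ u = v ∨ (cayley G X).Adj u v := by
  rw [cayley_eq_mulCayley, SimpleGraph.mulCayley_adj, wordBall, pow_one]
  simp only [Set.mem_insert_iff, Set.mem_union, Set.mem_inv, mul_inv_rev, inv_inv, inv_mul_eq_one]
  tauto

lemma cayley_edist_le_of_mem_wordBall (h : u⁻¹ * v ∈ wordBall X r) :
    (cayley G X).edist u v ≤ r := by
  induction r generalizing v with
  | zero =>
    rw [wordBall, pow_zero, Set.mem_one, inv_mul_eq_one] at h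
    simp [h]
  | succ r ih =>
    obtain ⟨a, ha, s, hs, has⟩ := wordBall_add X r 1 ▸ h
    have hstep : (u * a)⁻¹ * v ∈ wordBall X 1 := by
      rwa [mul_inv_rev, mul_assoc, ← has, inv_mul_cancel_left]
    calc (cayley G X).edist u v ≤ (cayley G X).edist u (u * a) + (cayley G X).edist (u * a) v :=
          SimpleGraph.edist_triangle
      _ ≤ r + 1 := by
          gcongr
          · exact ih (by simpa using ha)
          · exact SimpleGraph.edist_le_one_iff_adj_or_eq.2
              ((inv_mul_mem_wordBall_one_iff.1 hstep).symm)
      _ = (r + 1 : ℕ) := by push_cast; rfl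

lemma exists_mem_wordBall (hX : Subgroup.closure X = ⊤) (g : G) : ∃ r, g ∈ wordBall X r := by
  induction (hX ▸ Subgroup.mem_top g : g ∈ Subgroup.closure X) using Subgroup.closure_induction with
  | mem x hx => exact ⟨1, by simp [wordBall, hx]⟩
  | one => exact ⟨0, by simp [wordBall]⟩
  | mul x y _ _ hx hy =>
    obtain ⟨r, hr⟩ := hx
    obtain ⟨s, hs⟩ := hy
    exact ⟨r + s, wordBall_add X r s ▸ Set.mul_mem_mul hr hs⟩
  | inv x _ hx =>
    obtain ⟨r, hr⟩ := hx
    exact ⟨r, inv_mem_wordBall hr⟩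

lemma cayley_connected (hX : Subgroup.closure X = ⊤) : (cayley G X).Connected := by
  refine SimpleGraph.connected_iff_exists_forall_reachable _ |>.2 ⟨1, fun g => ?_⟩
  obtain ⟨r, hr⟩ := exists_mem_wordBall hX g
  refine SimpleGraph.reachable_of_edist_ne_top (ne_top_of_le_ne_top ?_
    (cayley_edist_le_of_mem_wordBall (by simpa using hr)))
  exact ENat.natCast_ne_top r

lemma inv_mul_mem_wordBall_of_walk (w : (cayley G X).Walk u v) :
    u⁻¹ * v ∈ wordBall X w.length := by
  induction w with
  | nil => simp [wordBall]
  | @cons a b c hab _ ih =>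
    rw [SimpleGraph.Walk.length_cons, add_comm, wordBall_add]
    exact (by group : a⁻¹ * b * (b⁻¹ * c) = a⁻¹ * c) ▸
      Set.mul_mem_mul (inv_mul_mem_wordBall_one_iff.2 (Or.inr hab)) ih

lemma cayley_dist_le_iff (hX : Subgroup.closure X = ⊤) :
    (cayley G X).dist u v ≤ r ↔ u⁻¹ * v ∈ wordBall X r := by
  have hreach := (cayley_connected hX).preconnected u v
  constructor
  · intro h
    obtain ⟨w, hw⟩ := hreach.exists_walk_length_eq_dist
    exact wordBall_mono (hw ▸ h) (inv_mul_mem_wordBall_of_walk w)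
  · intro h
    exact_mod_cast hreach.coe_dist_eq_edist ▸ cayley_edist_le_of_mem_wordBall h

lemma exists_subset_wordBall (hX : Subgroup.closure X = ⊤) {A : Set G} (hA : A.Finite) :
    ∃ r, A ⊆ wordBall X r := by
  induction A, hA using Set.Finite.induction_on with
  | empty => exact ⟨0, Set.empty_subset _⟩
  | @insert a A _ _ ih =>
    obtain ⟨r, hr⟩ := ih
    obtain ⟨s, hs⟩ := exists_mem_wordBall hX a
    exact ⟨max r s, Set.insert_subset (wordBall_mono (le_max_right r s) hs)
      (hr.trans (wordBall_mono (le_max_left r s)))⟩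

lemma cayley_dist_map_le {G' : Type*} [Group G'] {X' : Set G'} (hX : Subgroup.closure X = ⊤)
    (hX' : Subgroup.closure X' = ⊤) (φ : G →* G') {L : ℕ} (hφ : φ '' wordBall X 1 ⊆ wordBall X' L)
    (u v : G) : (cayley G' X').dist (φ u) (φ v) ≤ L * (cayley G X).dist u v := by
  have hmem : u⁻¹ * v ∈ wordBall X ((cayley G X).dist u v) := (cayley_dist_le_iff hX).1 le_rfl
  rw [← one_mul ((cayley G X).dist u v), wordBall_mul] at hmem
  rw [cayley_dist_le_iff hX', ← map_inv, ← map_mul, wordBall_mul]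
  exact Set.pow_subset_pow_left hφ (Set.image_pow φ _ _ ▸ Set.mem_image_of_mem φ hmem)

lemma countable_of_closure_eq_top (hXf : X.Finite) (hX : Subgroup.closure X = ⊤) : Countable G := by
  have : (⋃ r, wordBall X r) = Set.univ :=
    Set.eq_univ_of_forall fun g => Set.mem_iUnion.2 (exists_mem_wordBall hX g)
  exact Set.countable_univ_iff.1 <|
    this ▸ Set.countable_iUnion fun r => (wordBall_finite hXf r).countable

end Cayley

section Asdim

universe u

-- `AsdimLE` asks for an index type in `Type`; over a countable vertex set any partition shrinks
-- into one.
lemma asdimLE_of_countable {V : Type u} [Countable V] {Γ : SimpleGraph V} {n : ℕ}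
    (h : ∀ m : ℕ, 0 < m → ∃ (ι : Type u) (f : V → ι) (col : ι → Fin (n + 1)) (D : ℕ),
      (∀ u v : V, f u = f v → Γ.dist u v ≤ D) ∧
      (∀ u v : V, f u ≠ f v → col (f u) = col (f v) → m < Γ.dist u v)) :
    AsdimLE Γ n := by
  intro m hm
  obtain ⟨ι, f, col, D, hbdd, hsep⟩ := h m hm
  let e := equivShrink.{0} (Set.range f)
  refine ⟨Shrink (Set.range f), fun v => e ⟨f v, v, rfl⟩, fun i => col (e.symm i), D, ?_, ?_⟩
  · intro u v huv
    exact hbdd u v (by simpa [Subtype.ext_iff] using huv)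
  · intro u v huv hcol
    exact hsep u v (by simpa [Subtype.ext_iff] using huv) (by simpa using hcol)

variable {V W : Type*} {Γ : SimpleGraph V} {Δ : SimpleGraph W} {n : ℕ}

lemma AsdimLE.comap (j : V → W) (c L : ℕ) (hj : ∀ u v, Δ.dist (j u) (j v) ≤ c * Γ.dist u v)
    (hj' : ∀ u v, Γ.dist u v ≤ L * Δ.dist (j u) (j v)) (hW : AsdimLE Δ n) : AsdimLE Γ n := by
  intro m _
  obtain ⟨ι, f, col, D, hbdd, hsep⟩ := hW (c * m + 1) (Nat.succ_pos _)
  refine ⟨ι, f ∘ j, col, L * D, fun u v huv => ?_, fun u v huv hcol => ?_⟩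
  · exact (hj' u v).trans (Nat.mul_le_mul_left L (hbdd _ _ huv))
  · exact Nat.lt_of_mul_lt_mul_left
      ((Nat.lt_succ_self _).trans ((hsep _ _ huv hcol).trans_le (hj u v)))

/-- Preimages of `D`-bounded sets have asymptotic dimension `0`, uniformly: their `m`-chains are
`C`-bounded with `C` depending only on `D` and `m`. -/
def AsdimZeroOverBounded (Γ : SimpleGraph V) (Δ : SimpleGraph W) (p : V → W) : Prop :=
  ∀ D m : ℕ, ∃ C : ℕ, ∀ U : Set W, (∀ w ∈ U, ∀ w' ∈ U, Δ.dist w w' ≤ D) →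
    ∀ u v, p u ∈ U → ReflTransGen (fun a b => p b ∈ U ∧ Γ.dist a b ≤ m) u v → Γ.dist u v ≤ C

lemma AsdimLE.of_asdimZeroOverBounded [Countable V] (p : V → W) (c : ℕ)
    (hp : ∀ u v, Δ.dist (p u) (p v) ≤ c * Γ.dist u v) (hfib : AsdimZeroOverBounded Γ Δ p)
    (hW : AsdimLE Δ n) : AsdimLE Γ n := by
  refine asdimLE_of_countable fun m _ => ?_
  obtain ⟨ι, f, col, D, hbdd, hsep⟩ := hW (c * m + 1) (Nat.succ_pos _)
  obtain ⟨C, hC⟩ := hfib D m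
  let step (a b : V) : Prop := f (p a) = f (p b) ∧ Γ.dist a b ≤ m
  have : Std.Symm step := ⟨fun a b h => ⟨h.1.symm, Γ.dist_comm ▸ h.2⟩⟩
  have hclass : ∀ u v, ReflTransGen step u v → f (p v) = f (p u) ∧
      ReflTransGen (fun a b => p b ∈ {w | f w = f (p u)} ∧ Γ.dist a b ≤ m) u v := by
    intro u v huv
    induction huv with
    | refl => exact ⟨rfl, .refl⟩
    | tail _ hbc ih => exact ⟨hbc.1.symm.trans ih.1, ih.2.tail ⟨hbc.1.symm.trans ih.1, hbc.2⟩⟩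
  refine ⟨Quot step, Quot.mk step, Quot.lift (fun a => col (f (p a))) fun a b h => by rw [h.1],
    C, fun u v huv => ?_, fun u v huv hcol => ?_⟩
  · have huv' : ReflTransGen step u v := EqvGen.eqvGen_eq_reflTransGen step ▸ Quot.eqvGen_exact huv
    exact hC {w | f w = f (p u)} (fun w hw w' hw' => hbdd w w' (hw.trans hw'.symm)) u v rfl
      (hclass u v huv').2
  · by_cases hf : f (p u) = f (p v)
    · by_contra! hle
      exact huv (Quot.sound ⟨hf, hle⟩)
    · exact Nat.lt_of_mul_lt_mul_left
        ((Nat.lt_succ_self _).trans ((hsep _ _ hf hcol).trans_le (hp u v)))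

end Asdim

section LocallyFinite

variable {G : Type*} [Group G]

def Subgroup.IsLocallyFinite (K : Subgroup G) : Prop :=
  ∀ F : Finset G, (F : Set G) ⊆ K → ((Subgroup.closure (F : Set G) : Subgroup G) : Set G).Finite

lemma exists_finite_displacement_of_chain {K : Subgroup G} (hlf : K.IsLocallyFinite)
    {T A : Set G} (hT : T.Finite) (hA : A.Finite) :
    ∃ E : Set G, E.Finite ∧ ∀ x y, x ∈ (K : Set G) * T →
      ReflTransGen (fun a b => b ∈ (K : Set G) * T ∧ a⁻¹ * b ∈ A) x y → x⁻¹ * y ∈ E := by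
  let F := Subgroup.closure ((K : Set G) ∩ (T * A * T⁻¹))
  have hF : (F : Set G).Finite := by
    have hfin : ((K : Set G) ∩ (T * A * T⁻¹)).Finite := ((hT.mul hA).mul hT.inv).inter_of_right _
    simpa [F] using hlf hfin.toFinset (by simp)
  refine ⟨T⁻¹ * F * T, (hT.inv.mul hF).mul hT, ?_⟩
  rintro _ y ⟨κ, hκ, t, ht, rfl⟩ hxy
  -- a step `s` from `κ * f * t₁` to `κ' * t₂` multiplies `f` by `t₁ * s * t₂⁻¹ ∈ K ∩ T A T⁻¹`
  have hreach : ∃ f ∈ F, ∃ t' ∈ T, y = κ * f * t' := by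
    induction hxy with
    | refl => exact ⟨1, F.one_mem, t, ht, by simp⟩
    | tail _ hbc ih =>
      obtain ⟨f, hf, t₁, ht₁, rfl⟩ := ih
      obtain ⟨⟨κ', hκ', t₂, ht₂, rfl⟩, hs⟩ := hbc
      have hK : t₁ * ((κ * f * t₁)⁻¹ * (κ' * t₂)) * t₂⁻¹ ∈ K := by
        have hfK : f ∈ K := Subgroup.closure_le K |>.2 Set.inter_subset_left hf
        rw [(by group : t₁ * ((κ * f * t₁)⁻¹ * (κ' * t₂)) * t₂⁻¹ = (κ * f)⁻¹ * κ')]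
        exact K.mul_mem (K.inv_mem (K.mul_mem hκ hfK)) hκ'
      refine ⟨f * (t₁ * ((κ * f * t₁)⁻¹ * (κ' * t₂)) * t₂⁻¹),
        F.mul_mem hf (Subgroup.subset_closure ⟨hK, ?_⟩), t₂, ht₂, by group⟩
      exact Set.mul_mem_mul (Set.mul_mem_mul ht₁ hs) (Set.inv_mem_inv.2 ht₂)
  obtain ⟨f, hf, t', ht', rfl⟩ := hreach
  rw [(by group : (κ * t)⁻¹ * (κ * f * t') = t⁻¹ * f * t')]
  exact Set.mul_mem_mul (Set.mul_mem_mul (Set.inv_mem_inv.2 ht) hf) ht'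

end LocallyFinite

section Retraction

variable {G : Type*} [Group G] {H : Subgroup G} {n : ℕ}

lemma Subgroup.IsComplement'.exists_retraction {K : Subgroup G} [K.Normal]
    (h : H.IsComplement' K) : ∃ p : G →* H, (∀ x : H, p x = x) ∧ p.ker = K :=
  ⟨h.QuotientMulEquiv.toMonoidHom.comp (QuotientGroup.mk' K),
    fun _ => h.QuotientMulEquiv.eq_symm_apply.1 rfl, by ext; simp⟩

lemma cayley_asdimZeroOverBounded (p : G →* H) (hp : ∀ x : H, p x = x)
    (hlf : p.ker.IsLocallyFinite)
    {X : Set G} (hXf : X.Finite) (hX : Subgroup.closure X = ⊤)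
    {Y : Set H} (hYf : Y.Finite) (hY : Subgroup.closure Y = ⊤) :
    AsdimZeroOverBounded (cayley G X) (cayley H Y) p := by
  intro D m
  let T : Set G := H.subtype '' wordBall Y D
  obtain ⟨E, hE, hchain⟩ :=
    exists_finite_displacement_of_chain hlf ((wordBall_finite hYf D).image H.subtype)
      (wordBall_finite hXf m)
  obtain ⟨C, hC⟩ := exists_subset_wordBall hX hE
  refine ⟨C, fun U hU u v hu huv => ?_⟩
  have hlift : ∀ x, p x ∈ U → u⁻¹ * x ∈ (p.ker : Set G) * T := by
    intro x hx
    have ht : (p u)⁻¹ * p x ∈ wordBall Y D := (cayley_dist_le_iff hY).1 (hU _ hu _ hx)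
    refine ⟨u⁻¹ * x * (((p u)⁻¹ * p x : H) : G)⁻¹, by simp [hp], _, ⟨_, ht, rfl⟩, ?_⟩
    simp only [Subgroup.coe_subtype, inv_mul_cancel_right]
  have hchain' : ReflTransGen (fun a b => b ∈ (p.ker : Set G) * T ∧ a⁻¹ * b ∈ wordBall X m)
      (u⁻¹ * u) (u⁻¹ * v) :=
    ReflTransGen.lift (u⁻¹ * ·) (fun a b hab => ⟨hlift b hab.1,
      by simpa [mul_assoc] using (cayley_dist_le_iff hX).1 hab.2⟩) u v huv
  rw [cayley_dist_le_iff hX]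
  simpa using hC (hchain _ _ (hlift u hu) hchain')

theorem GroupAsdimLE.of_retraction_of_locallyFinite_ker (p : G →* H) (hp : ∀ x : H, p x = x)
    (hlf : p.ker.IsLocallyFinite)
    (hH : GroupAsdimLE H n) : GroupAsdimLE G n := by
  classical
  intro X hX
  have hYX : ((X.image p : Finset H) : Set H) = p '' X := Finset.coe_image
  have hY : Subgroup.closure ((X.image p : Finset H) : Set H) = ⊤ := by
    rw [hYX, ← MonoidHom.map_closure, hX]
    exact Subgroup.map_top_of_surjective p fun x => ⟨x, hp x⟩
  have : Countable G := countable_of_closure_eq_top X.finite_toSet hX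
  refine AsdimLE.of_asdimZeroOverBounded p 1
    (cayley_dist_map_le hX hY p (by rw [image_wordBall, hYX]))
    (cayley_asdimZeroOverBounded p hp hlf X.finite_toSet hX (Finset.finite_toSet _) hY)
    (hH _ hY)

theorem GroupAsdimLE.of_retraction (hfg : Group.FG G) (p : G →* H) (hp : ∀ x : H, p x = x)
    (hG : GroupAsdimLE G n) : GroupAsdimLE H n := by
  classical
  intro Y hY
  obtain ⟨X₀, hX₀⟩ := Group.fg_def.1 hfg
  let X : Finset G := X₀ ∪ Y.image H.subtype
  have hX : Subgroup.closure (X : Set G) = ⊤ :=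
    top_unique (hX₀ ▸ Subgroup.closure_mono (by simp [X]))
  obtain ⟨L, hL⟩ := exists_subset_wordBall hY ((wordBall_finite X.finite_toSet 1).image p)
  refine AsdimLE.comap H.subtype 1 L (cayley_dist_map_le hY hX H.subtype ?_) (fun u v => ?_)
    (hG X hX)
  · rw [image_wordBall]
    exact wordBall_subset_wordBall (by simp [X]) 1
  · simpa [hp] using cayley_dist_map_le hX hY p hL u v

end Retraction

/-- For a finitely generated internal semidirect product `G = H ⋉ K` with `K` locally
finite, `asdim G = asdim H`. -/
theorem asdim_semidirect_locally_finite {G : Type*} [Group G]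
    (H K : Subgroup G) (hK : K.Normal) (hcomp : Subgroup.IsComplement' H K)
    (hfg : Group.FG G)
    (hlf : ∀ F : Finset G, (F : Set G) ⊆ (K : Set G) →
      ((Subgroup.closure (F : Set G) : Subgroup G) : Set G).Finite) :
    ∀ n : ℕ, GroupAsdimLE G n ↔ GroupAsdimLE H n := by
  obtain ⟨p, hp, hker⟩ := hcomp.exists_retraction
  intro n
  exact ⟨GroupAsdimLE.of_retraction hfg p hp,
    GroupAsdimLE.of_retraction_of_locallyFinite_ker p hp (hker ▸ hlf)⟩
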